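/- arXiv:2401.03834 — 9 statements merged into one kernel-verified Lean document; each statement's English description precedes it below -/
import Mathlib

section
/- Let (Ω, F, μ) be a probability space, m ≥ 1 a natural number, and for each subset S ⊆ {1,…,m} let p_S : Ω → ℝ be measurable. Suppose S* ⊆ {1,…,m} is such that for every c ∈ (0,1), μ({ω : p_{S*}(ω) ≤ c}) ≤ c. Fix α ∈ (0,1) and define the (random) discovery set Ŝ(ω) = {i ∈ {1,…,m} : p_i*(ω) ≤ α}, where p_i*(ω) = max{p_S(ω) : S ⊆ {1,…,m} \ {i}}. Then μ({ω : Ŝ(ω) ⊆ S*}) ≥ 1 − α. -/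
open Finset MeasureTheory

/-- `pstar p I` is the maximum of `p U` over all subsets `U ⊆ {1,…,m} \ I`,
i.e. over all `U` disjoint from `I` (including `U = ∅`). -/
noncomputable def pstar {m : ℕ} (p : Finset (Fin m) → ℝ) (I : Finset (Fin m)) : ℝ :=
  ((univ : Finset (Fin m)).powerset.filter fun U => Disjoint U I).sup' ⟨∅, by simp⟩ p

/-- Proposition 3: the discovery set `Ŝ(ω) = {i : pᵢ*(ω) ≤ α}` obtained by directly
comparing `pᵢ* = pstar p {i}` to the nominal level `α` controls the FWER:
`μ(Ŝ ⊆ S*) ≥ 1 - α`. -/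
theorem stmt_1 {Ω : Type*} [MeasurableSpace Ω] (μ : Measure Ω) [IsProbabilityMeasure μ]
    (m : ℕ) (hm : 1 ≤ m) (p : Finset (Fin m) → Ω → ℝ)
    (hmeas : ∀ S : Finset (Fin m), Measurable (p S))
    (Sstar : Finset (Fin m))
    (hvalid : ∀ c : ℝ, c ∈ Set.Ioo (0 : ℝ) 1 →
      μ {ω | p Sstar ω ≤ c} ≤ ENNReal.ofReal c)
    (α : ℝ) (hα : α ∈ Set.Ioo (0 : ℝ) 1) :
    μ {ω | {i : Fin m | pstar (fun S => p S ω) {i} ≤ α} ⊆ (Sstar : Set (Fin m))}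
      ≥ ENNReal.ofReal (1 - α) := by
  set A : Set Ω := {ω | p Sstar ω ≤ α} with hA
  have hAm : MeasurableSet A := measurableSet_le (hmeas Sstar) measurable_const
  have hsub : Aᶜ ⊆ {ω | {i : Fin m | pstar (fun S => p S ω) {i} ≤ α} ⊆ (Sstar : Set (Fin m))} := by
    intro ω hω i hi
    by_contra hiS
    have hmem : Sstar ∈ ((univ : Finset (Fin m)).powerset.filter
        fun U => Disjoint U ({i} : Finset (Fin m))) := by
      simp only [Finset.mem_coe] at hiS
      simp [Finset.disjoint_singleton_right, hiS]
    have hle : p Sstar ω ≤ pstar (fun S => p S ω) {i} :=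
      Finset.le_sup' (α := ℝ) (fun S => p S ω) hmem
    exact hω (le_trans hle hi)
  calc ENNReal.ofReal (1 - α) = 1 - ENNReal.ofReal α := by
        rw [ENNReal.ofReal_sub _ hα.1.le, ENNReal.ofReal_one]
    _ ≤ 1 - μ A := by
        exact tsub_le_tsub_left (hvalid α hα) 1
    _ = μ Aᶜ := (prob_compl_eq_one_sub hAm).symm
    _ ≤ _ := measure_mono hsub
end

section
/- Let (Ω, F, μ) be a probability space, m ≥ 1 a natural number, and for each subset S ⊆ {1,…,m} let p_S : Ω → ℝ be measurable. Suppose S* ⊆ {1,…,m} is such that for every c ∈ (0,1), μ({ω : p_{S*}(ω) ≤ c}) ≤ c. Fix α ∈ (0,1) and define Ŝ^ICP(ω) = ⋂{S ⊆ {1,…,m} : p_S(ω) > α} if there exists at least one S with p_S(ω) > α, and Ŝ^ICP(ω) = ∅ otherwise. Then μ({ω : Ŝ^ICP(ω) ⊆ S*}) ≥ 1 − α. -/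
open Finset MeasureTheory

/-- The ICP discovery set: the intersection of all sets `S` with `p S > α`,
with the convention that it is `∅` when every hypothesis is rejected
(i.e. when no `S` satisfies `p S > α`). -/
noncomputable def ShatICP {m : ℕ} (p : Finset (Fin m) → ℝ) (α : ℝ) : Set (Fin m) :=
  if ∃ S : Finset (Fin m), α < p S then
    ⋂ S ∈ {S : Finset (Fin m) | α < p S}, (S : Set (Fin m))
  else ∅

/-- FWER guarantee of the original ICP procedure: `μ(Ŝ^ICP ⊆ S*) ≥ 1 - α`. -/
theorem stmt_3 {Ω : Type*} [MeasurableSpace Ω] (μ : Measure Ω) [IsProbabilityMeasure μ]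
    (m : ℕ) (hm : 1 ≤ m) (p : Finset (Fin m) → Ω → ℝ)
    (hmeas : ∀ S : Finset (Fin m), Measurable (p S))
    (Sstar : Finset (Fin m))
    (hvalid : ∀ c : ℝ, c ∈ Set.Ioo (0 : ℝ) 1 →
      μ {ω | p Sstar ω ≤ c} ≤ ENNReal.ofReal c)
    (α : ℝ) (hα : α ∈ Set.Ioo (0 : ℝ) 1) :
    μ {ω | ShatICP (fun S => p S ω) α ⊆ (Sstar : Set (Fin m))}
      ≥ ENNReal.ofReal (1 - α) := by
  have hsub : {ω | α < p Sstar ω} ⊆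
      {ω | ShatICP (fun S => p S ω) α ⊆ (Sstar : Set (Fin m))} := by
    intro ω hω
    simp only [Set.mem_setOf_eq] at hω ⊢
    rw [ShatICP, if_pos ⟨Sstar, hω⟩]
    exact Set.biInter_subset_of_mem (by exact hω)
  have hmeasS : MeasurableSet {ω | p Sstar ω ≤ α} :=
    measurableSet_le (hmeas Sstar) measurable_const
  have hcompl : {ω | α < p Sstar ω} = {ω | p Sstar ω ≤ α}ᶜ := by
    ext ω; simp [not_le]
  have h1 : μ {ω | α < p Sstar ω} ≥ ENNReal.ofReal (1 - α) := by
    rw [hcompl, measure_compl hmeasS (measure_ne_top μ _), measure_univ]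
    have h2 : μ {ω | p Sstar ω ≤ α} ≤ ENNReal.ofReal α := hvalid α hα
    calc ENNReal.ofReal (1 - α) = 1 - ENNReal.ofReal α := by
          rw [ENNReal.ofReal_sub 1 (le_of_lt hα.1), ENNReal.ofReal_one]
      _ ≤ 1 - μ {ω | p Sstar ω ≤ α} := tsub_le_tsub_left h2 1
  exact le_trans h1 (measure_mono hsub)
end

section
/- Let (Ω, F, μ) be a probability space, m ≥ 1 a natural number, and for each subset S ⊆ {1,…,m} let p_S : Ω → ℝ be measurable. Suppose S* ⊆ {1,…,m} is such that for every c ∈ (0,1), μ({ω : p_{S*}(ω) ≤ c}) ≤ c. Fix α ∈ (0,1). For I ⊆ {1,…,m} let p_I*(ω) = max{p_U(ω) : U ⊆ {1,…,m} \ I}, and for R ⊆ {1,…,m} let t_α(R)(ω) = min{|R \ I| : I ⊆ R and p_I*(ω) > α}, with the convention t_α(R)(ω) = 0 if no such I exists. Then μ({ω : for every R ⊆ {1,…,m}, |R ∩ S*| ≥ t_α(R)(ω)}) ≥ 1 − α. -/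
open Finset MeasureTheory

/-- The simultaneous true discovery bound
`t_α(R) = min {|R \ I| : I ⊆ R and pstar p I > α}`, with the convention that it
equals `0` when no such `I` exists (`sInf ∅ = 0` in `ℕ`). -/
noncomputable def tbound {m : ℕ} (p : Finset (Fin m) → ℝ) (α : ℝ)
    (R : Finset (Fin m)) : ℕ :=
  sInf {n : ℕ | ∃ I : Finset (Fin m), I ⊆ R ∧ α < pstar p I ∧ n = (R \ I).card}

/-- Theorem 1: the simultaneous true discovery bound. With probability at least
`1 - α`, simultaneously for every `R ⊆ {1,…,m}`, `|R ∩ S*| ≥ t_α(R)`. -/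
theorem stmt_4 {Ω : Type*} [MeasurableSpace Ω] (μ : Measure Ω) [IsProbabilityMeasure μ]
    (m : ℕ) (hm : 1 ≤ m) (p : Finset (Fin m) → Ω → ℝ)
    (hmeas : ∀ S : Finset (Fin m), Measurable (p S))
    (Sstar : Finset (Fin m))
    (hvalid : ∀ c : ℝ, c ∈ Set.Ioo (0 : ℝ) 1 →
      μ {ω | p Sstar ω ≤ c} ≤ ENNReal.ofReal c)
    (α : ℝ) (hα : α ∈ Set.Ioo (0 : ℝ) 1) :
    μ {ω | ∀ R : Finset (Fin m),
        tbound (fun S => p S ω) α R ≤ (R ∩ Sstar).card}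
      ≥ ENNReal.ofReal (1 - α) := by

  have hA : MeasurableSet {ω | p Sstar ω ≤ α} :=
    measurableSet_le (hmeas Sstar) measurable_const
  have hsub : {ω | p Sstar ω ≤ α}ᶜ ⊆ {ω | ∀ R : Finset (Fin m),
      tbound (fun S => p S ω) α R ≤ (R ∩ Sstar).card} := by
    intro ω hω R
    have hαlt : α < p Sstar ω := lt_of_not_ge hω
    have hmem : Sstar ∈ ((univ : Finset (Fin m)).powerset.filter
        fun U => Disjoint U (R \ Sstar)) := by
      simp [Finset.mem_filter, Finset.disjoint_sdiff]
    have hle : p Sstar ω ≤ pstar (fun S => p S ω) (R \ Sstar) := by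
      exact Finset.le_sup' (fun S => p S ω) hmem
    refine le_trans (Nat.sInf_le ⟨R \ Sstar, Finset.sdiff_subset, lt_of_lt_of_le hαlt hle, rfl⟩) ?_
    rw [Finset.sdiff_sdiff_self_left]
  calc ENNReal.ofReal (1 - α) = 1 - ENNReal.ofReal α := by
        rw [ENNReal.ofReal_sub _ hα.1.le, ENNReal.ofReal_one]
    _ ≤ 1 - μ {ω | p Sstar ω ≤ α} :=
        tsub_le_tsub_left (hvalid α hα) 1
    _ = μ ({ω | p Sstar ω ≤ α}ᶜ) := (prob_compl_eq_one_sub hA).symm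
    _ ≤ _ := μ.mono hsub
end

section
/- Let m ≥ 1, let (p_S) be a family of real numbers indexed by subsets S ⊆ {1,…,m}, let α be a real number, and let S* ⊆ {1,…,m}. For I ⊆ {1,…,m} let p_I* = max{p_U : U ⊆ {1,…,m} \ I}. Suppose max{p_U : U ⊆ S*} > α (equivalently, p_{N*}* > α for N* = {1,…,m} \ S*). Then for every R ⊆ {1,…,m} there exists I ⊆ R with p_I* > α and |R \ I| ≤ |R ∩ S*|; consequently min{|R \ I| : I ⊆ R and p_I* > α} ≤ |R ∩ S*|. -/
open Finset

lemma pstar_anti {m : ℕ} (p : Finset (Fin m) → ℝ) {I J : Finset (Fin m)}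
    (hIJ : I ⊆ J) : pstar p J ≤ pstar p I := by
  apply Finset.sup'_le
  intro U hU
  simp only [mem_filter, mem_powerset] at hU
  exact Finset.le_sup' p (by simp [mem_filter, hU.2.mono_right hIJ])

/-- Deterministic core of Theorem 1: if `p_{N*}* > α` (where `N* = [m] \ S*`,
so `pstar p Sstarᶜ = max {p U : U ⊆ S*} > α`), then for every `R` there is
`I ⊆ R` with `pstar p I > α` and `|R \ I| ≤ |R ∩ S*|`; consequently
`min {|R \ I| : I ⊆ R, pstar p I > α} ≤ |R ∩ S*|`. -/
theorem stmt_5 (m : ℕ) (hm : 1 ≤ m) (p : Finset (Fin m) → ℝ) (α : ℝ)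
    (Sstar : Finset (Fin m)) (h : α < pstar p Sstarᶜ) :
    ∀ R : Finset (Fin m),
      (∃ I : Finset (Fin m), I ⊆ R ∧ α < pstar p I ∧
        (R \ I).card ≤ (R ∩ Sstar).card) ∧
      sInf {n : ℕ | ∃ I : Finset (Fin m), I ⊆ R ∧ α < pstar p I ∧ n = (R \ I).card}
        ≤ (R ∩ Sstar).card := by
  intro R
  have hI : α < pstar p (R \ Sstar) := lt_of_lt_of_le h
    (pstar_anti p (fun x hx => by simp_all [Finset.mem_sdiff]))
  have hcard : (R \ (R \ Sstar)).card ≤ (R ∩ Sstar).card := by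
    rw [Finset.sdiff_sdiff_self_left]
  refine ⟨⟨R \ Sstar, Finset.sdiff_subset, hI, hcard⟩, ?_⟩
  exact le_trans (Nat.sInf_le ⟨R \ Sstar, Finset.sdiff_subset, hI, rfl⟩) hcard
end

section
/- Let m ≥ 1, let (p_S) be a family of real numbers indexed by subsets S ⊆ {1,…,m}, and let α be a real number. For I ⊆ {1,…,m} let p_I* = max{p_U : U ⊆ {1,…,m} \ I}. Assume there exists at least one S ⊆ {1,…,m} with p_S > α. Then for every R ⊆ {1,…,m}, min{|R \ I| : I ⊆ R and p_I* > α} = min{|R ∩ S| : S ⊆ {1,…,m} and p_S > α}, where under the stated assumption both minima are over nonempty collections (in particular I = ∅ satisfies p_∅* > α). -/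
/-! The closed-testing bound and the direct bound are infima of two sets of natural numbers,
each of whose elements is dominated by an element of the other: `I := R \ S` turns a
rejection set `S` into a shortcut witness, and the set `U` realising `α < pstar p I` turns a
shortcut witness back into `S := U` with `R ∩ U ⊆ R \ I`. -/

open Finset

theorem lt_pstar_iff {m : ℕ} {p : Finset (Fin m) → ℝ} {α : ℝ} {I : Finset (Fin m)} :
    α < pstar p I ↔ ∃ U, Disjoint U I ∧ α < p U := by
  simp [pstar, lt_sup'_iff]

namespace Nat

theorem sInf_le_sInf_of_forall_exists_le {A B : Set ℕ} (h : ∀ a ∈ A, ∃ b ∈ B, b ≤ a)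
    (hA : A.Nonempty) : sInf B ≤ sInf A := by
  obtain ⟨b, hb, hba⟩ := h _ (Nat.sInf_mem hA)
  exact (Nat.sInf_le hb).trans hba

theorem sInf_eq_of_forall_exists_le {A B : Set ℕ} (hAB : ∀ a ∈ A, ∃ b ∈ B, b ≤ a)
    (hBA : ∀ b ∈ B, ∃ a ∈ A, a ≤ b) : sInf A = sInf B := by
  rcases A.eq_empty_or_nonempty with rfl | hA
  · have hB : B = ∅ := Set.eq_empty_of_forall_notMem fun b hb => by simpa using hBA b hb
    rw [hB]
  · obtain ⟨b, hb, -⟩ := hAB _ (Nat.sInf_mem hA)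
    exact le_antisymm (sInf_le_sInf_of_forall_exists_le hBA ⟨b, hb⟩)
      (sInf_le_sInf_of_forall_exists_le hAB hA)

end Nat

theorem stmt_6_general (m : ℕ) (p : Finset (Fin m) → ℝ) (α : ℝ) :
    ∀ R : Finset (Fin m),
      sInf {n : ℕ | ∃ I : Finset (Fin m), I ⊆ R ∧ α < pstar p I ∧ n = (R \ I).card}
        = sInf {n : ℕ | ∃ S : Finset (Fin m), α < p S ∧ n = (R ∩ S).card} := by
  intro R
  apply Nat.sInf_eq_of_forall_exists_le
  · rintro _ ⟨I, -, hI, rfl⟩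
    obtain ⟨U, hUI, hU⟩ := lt_pstar_iff.mp hI
    exact ⟨_, ⟨U, hU, rfl⟩, card_le_card fun x hx =>
      mem_sdiff.mpr ⟨(mem_inter.mp hx).1, disjoint_left.mp hUI (mem_inter.mp hx).2⟩⟩
  · rintro _ ⟨S, hS, rfl⟩
    refine ⟨_, ⟨R \ S, sdiff_subset, lt_pstar_iff.mpr ⟨S, disjoint_sdiff, hS⟩, rfl⟩, ?_⟩
    rw [sdiff_sdiff_self_left]

/-- Theorem 2: the closed-testing shortcut bound
`t_α(R) = min {|R \ I| : I ⊆ R, pstar p I > α}` equals the direct ICP bound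
`t̃_α(R) = min {|R ∩ S| : p S > α}`, provided some `S` satisfies `p S > α`
(so both minima range over nonempty collections; in particular `pstar p ∅ > α`). -/
theorem stmt_6 (m : ℕ) (hm : 1 ≤ m) (p : Finset (Fin m) → ℝ) (α : ℝ)
    (hex : ∃ S : Finset (Fin m), α < p S) :
    ∀ R : Finset (Fin m),
      sInf {n : ℕ | ∃ I : Finset (Fin m), I ⊆ R ∧ α < pstar p I ∧ n = (R \ I).card}
        = sInf {n : ℕ | ∃ S : Finset (Fin m), α < p S ∧ n = (R ∩ S).card} :=
  stmt_6_general m p α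
end

section
/- Let m ≥ 1, let (p_S) be a family of real numbers indexed by subsets S ⊆ {1,…,m}, and let α ∈ (0,1). Define p_i* = max{p_S : S ⊆ {1,…,m} \ {i}}, define b = 1 if p_S ≤ α for every S ⊆ {1,…,m} and b = 0 otherwise, and define p̃_i*(α) = max(p_i*, b). Define Ŝ^ICP = ⋂{S ⊆ {1,…,m} : p_S > α} if there exists at least one S with p_S > α, and Ŝ^ICP = ∅ otherwise. Then {i ∈ {1,…,m} : p̃_i*(α) ≤ α} = Ŝ^ICP. -/
open Finset

/-
Rejecting `H_{0,S}` for every `S ∌ i` is the same as `i` lying in every non-rejected `S`, which is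
`pᵢ* ≤ α`. The term `b` is `1 > α` exactly when every hypothesis is rejected and `0 ≤ α`
otherwise, so it enforces the convention `Ŝ^ICP = ∅` in that case.
-/

lemma pstar_le_iff {m : ℕ} (p : Finset (Fin m) → ℝ) (I : Finset (Fin m)) (α : ℝ) :
    pstar p I ≤ α ↔ ∀ U : Finset (Fin m), Disjoint U I → p U ≤ α := by
  simp [pstar, Finset.sup'_le_iff]

lemma pstar_singleton_le_iff {m : ℕ} (p : Finset (Fin m) → ℝ) (i : Fin m) (α : ℝ) :
    pstar p {i} ≤ α ↔ ∀ S : Finset (Fin m), α < p S → i ∈ S := by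
  simp only [pstar_le_iff, Finset.disjoint_singleton_right]
  exact forall_congr' fun S => not_imp_comm.trans (by rw [not_le])

lemma mem_ShatICP_iff {m : ℕ} (p : Finset (Fin m) → ℝ) (α : ℝ) (i : Fin m) :
    i ∈ ShatICP p α ↔ (∃ S, α < p S) ∧ ∀ S, α < p S → i ∈ S := by
  unfold ShatICP
  split_ifs with h <;> simp [h]

lemma ite_le_iff_exists_lt {ι : Type*} (q : ι → ℝ) {α : ℝ} (h₀ : 0 ≤ α) (h₁ : α < 1)
    [Decidable (∀ S, q S ≤ α)] :
    (if ∀ S, q S ≤ α then (1 : ℝ) else 0) ≤ α ↔ ∃ S, α < q S := by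
  split_ifs with h
  · simpa [not_le.mpr h₁] using h
  · simpa [h₀] using h

theorem stmt_8_general (m : ℕ) (p : Finset (Fin m) → ℝ)
    (α : ℝ) (hα : α ∈ Set.Ioo (0 : ℝ) 1)
    (b : ℝ) (hb : b = if ∀ S : Finset (Fin m), p S ≤ α then (1 : ℝ) else 0) :
    {i : Fin m | max (pstar p {i}) b ≤ α} = ShatICP p α := by
  ext i
  rw [Set.mem_ofPred_eq, max_le_iff, mem_ShatICP_iff, pstar_singleton_le_iff, hb,
    ite_le_iff_exists_lt p hα.1.le hα.2, and_comm]

/-- Proposition 2: with `b = Π_S 1_{p_S ≤ α}` and `p̃ᵢ*(α) = max (pᵢ*, b)`, the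
set `{i : p̃ᵢ*(α) ≤ α}` coincides with the ICP discovery set `Ŝ^ICP`. -/
theorem stmt_8 (m : ℕ) (hm : 1 ≤ m) (p : Finset (Fin m) → ℝ)
    (α : ℝ) (hα : α ∈ Set.Ioo (0 : ℝ) 1)
    (b : ℝ) (hb : b = if ∀ S : Finset (Fin m), p S ≤ α then (1 : ℝ) else 0) :
    {i : Fin m | max (pstar p {i}) b ≤ α} = ShatICP p α :=
  stmt_8_general m p α hα b hb
end

section
/- Let m ≥ 1, let (p_S) be a family of real numbers indexed by subsets S ⊆ {1,…,m}, and let α be a real number. Assume there exists at least one S with p_S > α, and let R = ⋂{S ⊆ {1,…,m} : p_S > α} be the ICP discovery set. For I ⊆ {1,…,m} let p_I* = max{p_U : U ⊆ {1,…,m} \ I}. Then min{|R \ I| : I ⊆ R and p_I* > α} = |R|; that is, the simultaneous true discovery bound evaluated at the ICP discovery set equals its cardinality, t_α(Ŝ^ICP) = |Ŝ^ICP|. -/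
open Finset

/-- Section 4.2: the simultaneous true discovery bound evaluated at the ICP
discovery set `R = Ŝ^ICP = ⋂ {S : p S > α}` (intersection over a nonempty
collection) equals `|R|`, i.e. `t_α(Ŝ^ICP) = |Ŝ^ICP|`. -/
theorem stmt_12 (m : ℕ) (hm : 1 ≤ m) (p : Finset (Fin m) → ℝ) (α : ℝ)
    (hex : ∃ S : Finset (Fin m), α < p S)
    (R : Finset (Fin m))
    (hR : (R : Set (Fin m)) = ⋂ S ∈ {S : Finset (Fin m) | α < p S}, (S : Set (Fin m))) :
    sInf {n : ℕ | ∃ I : Finset (Fin m), I ⊆ R ∧ α < pstar p I ∧ n = (R \ I).card}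
      = R.card := by
  obtain ⟨S₀, hS₀⟩ := hex
  -- R ⊆ S for any S with α < p S
  have hRsub : ∀ S : Finset (Fin m), α < p S → R ⊆ S := by
    intro S hS x hx
    have : (x : Fin m) ∈ (R : Set (Fin m)) := hx
    rw [hR] at this
    simpa using Set.mem_iInter₂.mp this S hS
  have hset : {n : ℕ | ∃ I : Finset (Fin m), I ⊆ R ∧ α < pstar p I ∧ n = (R \ I).card}
      = {R.card} := by
    ext n
    simp only [Set.mem_setOf_eq, Set.mem_singleton_iff]
    constructor
    · rintro ⟨I, hIR, hα, rfl⟩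
      -- pstar p I > α gives U disjoint from I with α < p U
      obtain ⟨U, hUdisj, hU⟩ : ∃ U, Disjoint U I ∧ α < p U := by
        simpa [pstar, Finset.lt_sup'_iff] using hα
      have hIempty : I = ∅ := by
        have hRU : R ⊆ U := hRsub U hU
        have : Disjoint I I := hUdisj.symm.mono_right (hIR.trans hRU)
        simpa using this
      rw [hIempty, sdiff_empty]
    · rintro rfl
      refine ⟨∅, empty_subset _, ?_, by rw [sdiff_empty]⟩
      have : α < p S₀ := hS₀
      calc α < p S₀ := hS₀
        _ ≤ pstar p ∅ := by
            apply le_sup'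
            simp
  rw [hset, csInf_singleton]
end

section
/- Let (Ω, F, μ) be a probability space, m ≥ 1 a natural number, and for each subset S ⊆ {1,…,m} let p_S : Ω → ℝ be measurable. Suppose S* ⊆ {1,…,m} is such that for every c ∈ (0,1), μ({ω : p_{S*}(ω) ≤ c}) ≤ c. Fix α ∈ (0,1) and define t̃_α(R)(ω) = min{|R ∩ S| : S ⊆ {1,…,m} and p_S(ω) > α}, with the convention t̃_α(R)(ω) = 0 if no S satisfies p_S(ω) > α. Then μ({ω : for every R ⊆ {1,…,m}, |R ∩ S*| ≥ t̃_α(R)(ω)}) ≥ 1 − α. -/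
open Finset MeasureTheory

/-- The direct ICP simultaneous true discovery bound
`t̃_α(R) = min {|R ∩ S| : p S > α}`, with the convention that it equals `0`
when no `S` satisfies `p S > α` (`sInf ∅ = 0` in `ℕ`). -/
noncomputable def tboundTilde {m : ℕ} (p : Finset (Fin m) → ℝ) (α : ℝ)
    (R : Finset (Fin m)) : ℕ :=
  sInf {n : ℕ | ∃ S : Finset (Fin m), α < p S ∧ n = (R ∩ S).card}

/-- The simultaneous true discovery bound from the original ICP formulation:
with probability at least `1 - α`, simultaneously for every `R ⊆ {1,…,m}`,
`|R ∩ S*| ≥ t̃_α(R)`. -/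
theorem stmt_14 {Ω : Type*} [MeasurableSpace Ω] (μ : Measure Ω) [IsProbabilityMeasure μ]
    (m : ℕ) (hm : 1 ≤ m) (p : Finset (Fin m) → Ω → ℝ)
    (hmeas : ∀ S : Finset (Fin m), Measurable (p S))
    (Sstar : Finset (Fin m))
    (hvalid : ∀ c : ℝ, c ∈ Set.Ioo (0 : ℝ) 1 →
      μ {ω | p Sstar ω ≤ c} ≤ ENNReal.ofReal c)
    (α : ℝ) (hα : α ∈ Set.Ioo (0 : ℝ) 1) :
    μ {ω | ∀ R : Finset (Fin m),
        tboundTilde (fun S => p S ω) α R ≤ (R ∩ Sstar).card}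
      ≥ ENNReal.ofReal (1 - α) := by
  have hsub : {ω | α < p Sstar ω} ⊆ {ω | ∀ R : Finset (Fin m),
      tboundTilde (fun S => p S ω) α R ≤ (R ∩ Sstar).card} := by
    intro ω hω R
    exact Nat.sInf_le ⟨Sstar, hω, rfl⟩
  have hA : MeasurableSet {ω | p Sstar ω ≤ α} :=
    measurableSet_le (hmeas Sstar) measurable_const
  have hcompl : {ω | α < p Sstar ω} = {ω | p Sstar ω ≤ α}ᶜ := by
    ext ω; simp [not_le]
  calc ENNReal.ofReal (1 - α)
      ≤ 1 - ENNReal.ofReal α := by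
        rw [← ENNReal.ofReal_one, ← ENNReal.ofReal_sub _ hα.1.le]
    _ ≤ 1 - μ {ω | p Sstar ω ≤ α} := by
        exact tsub_le_tsub_left (hvalid α hα) 1
    _ = μ {ω | p Sstar ω ≤ α}ᶜ := by
        rw [measure_compl hA (measure_ne_top μ _), measure_univ]
    _ = μ {ω | α < p Sstar ω} := by rw [hcompl]
    _ ≤ _ := measure_mono hsub
end

section
/- Let (Ω, F, μ) be a probability space, m ≥ 1 a natural number, and for each subset S ⊆ {1,…,m} let p_S : Ω → ℝ be measurable. Suppose S* ⊆ {1,…,m} is such that for every c ∈ (0,1), μ({ω : p_{S*}(ω) ≤ c}) ≤ c, and let N* = {1,…,m} \ S*. Fix α ∈ (0,1). For I ⊆ {1,…,m} let p_I*(ω) = max{p_U(ω) : U ⊆ {1,…,m} \ I}, and for R ⊆ {1,…,m} let t_α(R)(ω) = min{|R \ I| : I ⊆ R and p_I*(ω) > α}, with the convention t_α(R)(ω) = 0 if no such I exists. Then μ({ω : for every R ⊆ {1,…,m}, |R ∩ N*| ≤ |R| − t_α(R)(ω)}) ≥ 1 − α. -/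
open Finset MeasureTheory

/-- Simultaneous false discovery bound (equivalent form of Theorem 1): with
probability at least `1 - α`, simultaneously for every `R`, the number of null
causal predictors in `R` satisfies `|R ∩ N*| ≤ |R| - t_α(R)`, where `N* = Sstarᶜ`. -/
theorem stmt_16 {Ω : Type*} [MeasurableSpace Ω] (μ : Measure Ω) [IsProbabilityMeasure μ]
    (m : ℕ) (hm : 1 ≤ m) (p : Finset (Fin m) → Ω → ℝ)
    (hmeas : ∀ S : Finset (Fin m), Measurable (p S))
    (Sstar : Finset (Fin m)) (Nstar : Finset (Fin m)) (hN : Nstar = Sstarᶜ)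
    (hvalid : ∀ c : ℝ, c ∈ Set.Ioo (0 : ℝ) 1 →
      μ {ω | p Sstar ω ≤ c} ≤ ENNReal.ofReal c)
    (α : ℝ) (hα : α ∈ Set.Ioo (0 : ℝ) 1) :
    μ {ω | ∀ R : Finset (Fin m),
        (R ∩ Nstar).card ≤ R.card - tbound (fun S => p S ω) α R}
      ≥ ENNReal.ofReal (1 - α) := by
  have key : {ω | α < p Sstar ω} ⊆ {ω | ∀ R : Finset (Fin m),
      (R ∩ Nstar).card ≤ R.card - tbound (fun S => p S ω) α R} := by
    intro ω hω R
    have hIsub : R ∩ Nstar ⊆ R := inter_subset_left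
    have hdisj : Disjoint Sstar (R ∩ Nstar) := by
      subst hN
      exact disjoint_compl_right.mono_right inter_subset_right
    have hmem : Sstar ∈ ((univ : Finset (Fin m)).powerset.filter
        fun U => Disjoint U (R ∩ Nstar)) := by
      simp [hdisj]
    have hps : α < pstar (fun S => p S ω) (R ∩ Nstar) :=
      lt_of_lt_of_le hω (by unfold pstar; exact le_sup' (fun S => p S ω) hmem)
    have htb : tbound (fun S => p S ω) α R ≤ (R \ (R ∩ Nstar)).card :=
      Nat.sInf_le ⟨R ∩ Nstar, hIsub, hps, rfl⟩
    have hcard : (R \ (R ∩ Nstar)).card = R.card - (R ∩ Nstar).card :=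
      card_sdiff_of_subset hIsub
    have hle : (R ∩ Nstar).card ≤ R.card := card_le_card hIsub
    omega
  have hms : MeasurableSet {ω | p Sstar ω ≤ α} :=
    measurableSet_le (hmeas Sstar) measurable_const
  have hcompl : {ω | α < p Sstar ω} = {ω | p Sstar ω ≤ α}ᶜ := by
    ext ω; simp [not_le]
  have h1 : μ {ω | α < p Sstar ω} = 1 - μ {ω | p Sstar ω ≤ α} := by
    rw [hcompl, measure_compl hms (measure_ne_top μ _), measure_univ]
  have h2 : ENNReal.ofReal (1 - α) ≤ μ {ω | α < p Sstar ω} := by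
    rw [h1]
    have : ENNReal.ofReal (1 - α) = 1 - ENNReal.ofReal α := by
      rw [← ENNReal.ofReal_one, ← ENNReal.ofReal_sub _ hα.1.le]
    rw [this]
    exact tsub_le_tsub_left (hvalid α hα) 1
  exact le_trans h2 (measure_mono key)
end
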